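/- arXiv:2206.07884 — 2 statements merged into one kernel-verified Lean document; each statement's English description precedes it below -/
import Mathlib

section
/- Let $\varphi_k,\varphi_{k+1}\in C^{1}(Q_7')$ with $\varphi_k\le\varphi_{k+1}$ and $\|D\varphi_k\|_\infty,\|D\varphi_{k+1}\|_\infty\le 1/(20n)$. Define $T_k(x^1,x') = (x^1-\varphi_k(x'))/(\varphi_{k+1}(x')-\varphi_k(x'))$ on the strip $Q_6^k=\{(x^1,x')\in Q_6 : \varphi_k(x') < x^1 \le \varphi_{k+1}(x')\}$ (assuming $\varphi_k+\delta\le\varphi_{k+1}$ for some $\delta>0$), and define the flow displacement $\psi(x,t') = (\varphi_{k+1}(x'+t')-\varphi_{k+1}(x'))T_k(x) + (\varphi_k(x'+t')-\varphi_k(x'))(1-T_k(x))$ for $(x,t')\in Q_6^k\times Q_1'$. Then for all $(x,t')\in Q_6^k\times Q_1'$ the point $(x^1+\psi(x,t'),\,x'+t')$ lies in the strip $Q_7^k = \{(y^1,y')\in Q_7 : \varphi_k(y') < y^1 \le \varphi_{k+1}(y')\}$. -/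
/-!
The flow keeps the relative height `T = (x¹ - φₖ(x')) / (φₖ₊₁(x') - φₖ(x'))` of a point in the
strip: the moved point is `(1 - T) φₖ(x' + t') + T φₖ₊₁(x' + t')`, with `T ∈ (0, 1]`, so it stays
between the two graphs over `x' + t'`, strictly above the lower one since the graphs are `δ` apart.
The gradient bound makes both graphs `1/20`-Lipschitz on `Q₇'`, so the vertical displacement is at
most `1/20` and the point stays in `Q₇`.
-/

lemma abs_sub_le_of_norm_fderiv_le_of_norm_lt {E : Type*} [NormedAddCommGroup E]
    [NormedSpace ℝ E] {f : E → ℝ} {R C : ℝ}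
    (hd : ∀ z : E, ‖z‖ < R → DifferentiableAt ℝ f z)
    (hg : ∀ z : E, ‖z‖ < R → ‖fderiv ℝ f z‖ ≤ C) {x y : E} (hx : ‖x‖ < R) (hy : ‖y‖ < R) :
    |f y - f x| ≤ C * ‖y - x‖ := by
  simp_rw [← mem_ball_zero_iff] at hd hg hx hy
  exact (convex_ball (0 : E) R).norm_image_sub_le_of_norm_fderiv_le hd hg hx hy

lemma div_sub_sub_mem_Ioc {a b x : ℝ} (hax : a < x) (hxb : x ≤ b) :
    (x - a) / (b - a) ∈ Set.Ioc 0 1 :=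
  ⟨div_pos (by linarith) (by linarith), (div_le_one (by linarith)).2 (by linarith)⟩

lemma add_displacement_eq_of_eq_add_mul_sub {a b a' b' x T : ℝ} (hx : x = a + T * (b - a)) :
    x + ((b' - b) * T + (a' - a) * (1 - T)) = (1 - T) * a' + T * b' := by
  subst hx
  ring

lemma abs_mul_add_mul_one_sub_le {u v T ε : ℝ} (hT₀ : 0 ≤ T) (hT₁ : T ≤ 1)
    (hu : |u| ≤ ε) (hv : |v| ≤ ε) : |u * T + v * (1 - T)| ≤ ε := by
  rw [abs_le] at hu hv ⊢
  constructor <;> nlinarith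

lemma lt_one_sub_mul_add_mul {a b T : ℝ} (hT : 0 < T) (hab : a < b) :
    a < (1 - T) * a + T * b := by
  nlinarith

lemma one_sub_mul_add_mul_le {a b T : ℝ} (hT : T ≤ 1) (hab : a ≤ b) :
    (1 - T) * a + T * b ≤ b := by
  nlinarith

/-- The interpolation flow between two bounding graphs preserves the strip between them. -/
theorem stmt_1 (m : ℕ) (φk φk1 : (Fin m → ℝ) → ℝ) (δ : ℝ) (hδ : 0 < δ)
    (hsep : ∀ x' : Fin m → ℝ, ‖x'‖ < 7 → φk x' + δ ≤ φk1 x')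
    (hdk : ∀ x' : Fin m → ℝ, ‖x'‖ < 7 → DifferentiableAt ℝ φk x')
    (hdl : ∀ x' : Fin m → ℝ, ‖x'‖ < 7 → DifferentiableAt ℝ φk1 x')
    (hgk : ∀ x' : Fin m → ℝ, ‖x'‖ < 7 → ‖fderiv ℝ φk x'‖ ≤ 1 / (20 * (m + 1)))
    (hgl : ∀ x' : Fin m → ℝ, ‖x'‖ < 7 → ‖fderiv ℝ φk1 x'‖ ≤ 1 / (20 * (m + 1))) :
    ∀ (x1 : ℝ) (x' t' : Fin m → ℝ),
      |x1| < 6 → ‖x'‖ < 6 → φk x' < x1 → x1 ≤ φk1 x' → ‖t'‖ < 1 →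
      |x1 + ((φk1 (x' + t') - φk1 x') * ((x1 - φk x') / (φk1 x' - φk x')) +
              (φk (x' + t') - φk x') * (1 - (x1 - φk x') / (φk1 x' - φk x')))| < 7 ∧
      ‖x' + t'‖ < 7 ∧
      φk (x' + t') <
        x1 + ((φk1 (x' + t') - φk1 x') * ((x1 - φk x') / (φk1 x' - φk x')) +
              (φk (x' + t') - φk x') * (1 - (x1 - φk x') / (φk1 x' - φk x'))) ∧
      x1 + ((φk1 (x' + t') - φk1 x') * ((x1 - φk x') / (φk1 x' - φk x')) +
              (φk (x' + t') - φk x') * (1 - (x1 - φk x') / (φk1 x' - φk x'))) ≤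
        φk1 (x' + t') := by
  intro x1 x' t' hx1 hx' hlow hhigh ht'
  have hx'7 : ‖x'‖ < 7 := by linarith
  have hy'7 : ‖x' + t'‖ < 7 := (norm_add_le _ _).trans_lt (by linarith)
  have hlip : ∀ φ : (Fin m → ℝ) → ℝ, (∀ z : Fin m → ℝ, ‖z‖ < 7 → DifferentiableAt ℝ φ z) →
      (∀ z : Fin m → ℝ, ‖z‖ < 7 → ‖fderiv ℝ φ z‖ ≤ 1 / (20 * (m + 1))) →
      |φ (x' + t') - φ x'| ≤ 1 / 20 := fun φ hd hg => by
    refine (abs_sub_le_of_norm_fderiv_le_of_norm_lt hd hg hx'7 hy'7).trans ?_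
    rw [add_sub_cancel_left, div_mul_eq_mul_div, one_mul,
      div_le_div_iff₀ (by positivity) (by norm_num)]
    nlinarith [norm_nonneg t', (Nat.cast_nonneg m : (0 : ℝ) ≤ m)]
  set T := (x1 - φk x') / (φk1 x' - φk x') with hT
  obtain ⟨hT₀, hT₁⟩ := div_sub_sub_mem_Ioc hlow hhigh
  have hx1 : x1 = φk x' + T * (φk1 x' - φk x') := by
    rw [hT, div_mul_cancel₀ _ (by linarith [hsep x' hx'7])]
    ring
  have hdisp := abs_mul_add_mul_one_sub_le hT₀.le hT₁ (hlip φk1 hdl hgl) (hlip φk hdk hgk)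
  have hsep' := hsep _ hy'7
  refine ⟨(abs_add_le _ _).trans_lt (by linarith), hy'7, ?_, ?_⟩ <;>
    rw [add_displacement_eq_of_eq_add_mul_sub hx1]
  · exact lt_one_sub_mul_add_mul hT₀ (by linarith)
  · exact one_sub_mul_add_mul_le hT₁ (by linarith)
end

section
/- Let $\phi:[0,R]\to[0,\infty)$ and suppose there are constants $A,B\ge0$ and $0\le\beta<\alpha$ such that $\phi(\rho)\le A(\rho/r)^\alpha\phi(r) + B r^\beta (r/\rho)^n$ for all $0<\rho\le r\le R$. Then for each $\gamma\in(\beta,\alpha)$ there exists $c=c(n,A,\alpha,\beta,\gamma)$ such that $\phi(\rho)\le c\big[(\rho/r)^\gamma\phi(r) + B\rho^\beta\big]$ for all $0<\rho\le r\le R$. -/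
/-! Choose `τ ∈ (0,1)` so small that `A τ^α ≤ τ^γ`. At ratio `ρ/r ≥ τ` the amplification
factor `(r/ρ)^n` is at most the constant `τ^{-n}`, so the hypothesis gives the one-step decay
`φ(τ r) ≤ τ^γ φ(r) + τ^{-n} B r^β`. Iterating it, the inhomogeneous terms form a geometric series
dominated by its last term because `γ > β`: `φ(τ^k r) ≤ τ^{kγ} φ(r) + M B (τ^k r)^β` with
`M = τ^{-n} / (τ^β - τ^γ)`. An arbitrary `ρ ≤ r` lies in some `(τ^{k+1} r, τ^k r]`, and one more
application of the hypothesis bridges the gap to `τ^k r`. -/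

open Real Set Filter Topology

lemma exists_mem_Ioo_mul_rpow_le_one (A : ℝ) {δ : ℝ} (hδ : 0 < δ) :
    ∃ τ ∈ Ioo (0 : ℝ) 1, A * τ ^ δ ≤ 1 := by
  have hlim : Tendsto (fun τ : ℝ => A * τ ^ δ) (𝓝[>] 0) (𝓝 0) := by
    have hpow : Tendsto (fun τ : ℝ => τ ^ δ) (𝓝 0) (𝓝 (0 ^ δ)) :=
      (continuousAt_rpow_const 0 δ (Or.inr hδ.le)).tendsto
    simpa [zero_rpow hδ.ne'] using (hpow.const_mul A).mono_left nhdsWithin_le_nhds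
  exact (Eventually.and (Ioo_mem_nhdsGT one_pos) (hlim.eventually (ge_mem_nhds one_pos))).exists

lemma apply_le_of_decay_of_mul_le {φ : ℝ → ℝ} {n : ℕ} {R A B α β τ : ℝ} (hB : 0 ≤ B)
    (hdecay : ∀ ρ r : ℝ, 0 < ρ → ρ ≤ r → r ≤ R →
      φ ρ ≤ A * (ρ / r) ^ α * φ r + B * r ^ β * ((r / ρ) ^ n))
    (hτ : 0 < τ) {ρ s : ℝ} (hρ : 0 < ρ) (hτs : τ * s ≤ ρ) (hρs : ρ ≤ s) (hsR : s ≤ R) :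
    φ ρ ≤ A * (ρ / s) ^ α * φ s + τ⁻¹ ^ n * B * s ^ β := by
  have hratio : (s / ρ) ^ n ≤ τ⁻¹ ^ n := by
    refine pow_le_pow_left₀ (div_nonneg (hρ.le.trans hρs) hρ.le) ?_ n
    rw [div_le_iff₀ hρ, le_inv_mul_iff₀ hτ]
    exact hτs
  have hBs : 0 ≤ B * s ^ β := mul_nonneg hB (rpow_nonneg (hρ.le.trans hρs) β)
  calc φ ρ ≤ A * (ρ / s) ^ α * φ s + B * s ^ β * (s / ρ) ^ n := hdecay ρ s hρ hρs hsR
    _ ≤ A * (ρ / s) ^ α * φ s + B * s ^ β * τ⁻¹ ^ n := by gcongr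
    _ = A * (ρ / s) ^ α * φ s + τ⁻¹ ^ n * B * s ^ β := by ring

lemma apply_le_of_decay {φ : ℝ → ℝ} {n : ℕ} {R A B α β τ : ℝ} (hA : 0 ≤ A) (hB : 0 ≤ B)
    (hα : 0 ≤ α) (hφ : ∀ t, 0 ≤ t → t ≤ R → 0 ≤ φ t)
    (hdecay : ∀ ρ r : ℝ, 0 < ρ → ρ ≤ r → r ≤ R →
      φ ρ ≤ A * (ρ / r) ^ α * φ r + B * r ^ β * ((r / ρ) ^ n))
    (hτ : 0 < τ) {ρ s : ℝ} (hρ : 0 < ρ) (hτs : τ * s ≤ ρ) (hρs : ρ ≤ s) (hsR : s ≤ R) :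
    φ ρ ≤ A * φ s + τ⁻¹ ^ n * B * s ^ β := by
  have hs : 0 < s := hρ.trans_le hρs
  have hratio : (ρ / s) ^ α ≤ 1 :=
    rpow_le_one (div_nonneg hρ.le hs.le) ((div_le_one hs).mpr hρs) hα
  have hAφ : A * (ρ / s) ^ α * φ s ≤ A * φ s :=
    mul_le_mul_of_nonneg_right (mul_le_of_le_one_right hA hratio) (hφ s hs.le hsR)
  linarith [apply_le_of_decay_of_mul_le hB hdecay hτ hρ hτs hρs hsR]

lemma apply_mul_le_of_decay {φ : ℝ → ℝ} {n : ℕ} {R A B α β γ τ : ℝ} (hB : 0 ≤ B)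
    (hφ : ∀ t, 0 ≤ t → t ≤ R → 0 ≤ φ t)
    (hdecay : ∀ ρ r : ℝ, 0 < ρ → ρ ≤ r → r ≤ R →
      φ ρ ≤ A * (ρ / r) ^ α * φ r + B * r ^ β * ((r / ρ) ^ n))
    (hτ : τ ∈ Ioo 0 1) (hAτ : A * τ ^ (α - γ) ≤ 1) {r : ℝ} (hr : 0 < r) (hrR : r ≤ R) :
    φ (τ * r) ≤ τ ^ γ * φ r + τ⁻¹ ^ n * B * r ^ β := by
  have hAτα : A * τ ^ α ≤ τ ^ γ := by
    calc A * τ ^ α = A * τ ^ (α - γ) * τ ^ γ := by rw [mul_assoc, ← rpow_add hτ.1, sub_add_cancel]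
      _ ≤ τ ^ γ := mul_le_of_le_one_left (rpow_nonneg hτ.1.le γ) hAτ
  have h := apply_le_of_decay_of_mul_le hB hdecay hτ.1 (mul_pos hτ.1 hr) le_rfl
    (mul_le_of_le_one_left hr.le hτ.2.le) hrR
  rw [mul_div_cancel_right₀ τ hr.ne'] at h
  linarith [mul_le_mul_of_nonneg_right hAτα (hφ r hr.le hrR)]

lemma apply_pow_mul_le_of_apply_mul_le {φ : ℝ → ℝ} {R τ β γ C : ℝ} (hτ : τ ∈ Ioo 0 1)
    (hβγ : β < γ) (hC : 0 ≤ C)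
    (hstep : ∀ r, 0 < r → r ≤ R → φ (τ * r) ≤ τ ^ γ * φ r + C * r ^ β)
    (k : ℕ) {r : ℝ} (hr : 0 < r) (hrR : r ≤ R) :
    φ (τ ^ k * r) ≤ (τ ^ k) ^ γ * φ r + C / (τ ^ β - τ ^ γ) * (τ ^ k * r) ^ β := by
  have hgap : 0 < τ ^ β - τ ^ γ := sub_pos.mpr (rpow_lt_rpow_of_exponent_gt hτ.1 hτ.2 hβγ)
  set D := C / (τ ^ β - τ ^ γ)
  have hD : τ ^ γ * D + C = τ ^ β * D := by
    simp only [D]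
    field_simp
    ring
  induction k with
  | zero =>
    simpa using le_add_of_nonneg_right (a := φ r)
      (mul_nonneg (div_nonneg hC hgap.le) (rpow_nonneg hr.le β))
  | succ k ih =>
    have hτk : 0 < τ ^ k := pow_pos hτ.1 k
    have hτkR : τ ^ k * r ≤ R :=
      (mul_le_of_le_one_left hr.le (pow_le_one₀ hτ.1.le hτ.2.le)).trans hrR
    calc φ (τ ^ (k + 1) * r) = φ (τ * (τ ^ k * r)) := by ring_nf
      _ ≤ τ ^ γ * φ (τ ^ k * r) + C * (τ ^ k * r) ^ β := hstep _ (mul_pos hτk hr) hτkR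
      _ ≤ τ ^ γ * ((τ ^ k) ^ γ * φ r + D * (τ ^ k * r) ^ β) + C * (τ ^ k * r) ^ β := by
        gcongr
        exact rpow_nonneg hτ.1.le γ
      _ = τ ^ γ * (τ ^ k) ^ γ * φ r + τ ^ β * D * (τ ^ k * r) ^ β := by rw [← hD]; ring
      _ = (τ ^ (k + 1)) ^ γ * φ r + D * (τ ^ (k + 1) * r) ^ β := by
        rw [pow_succ', mul_rpow hτ.1.le hτk.le, mul_assoc τ, mul_rpow hτ.1.le (by positivity)]
        ring

lemma apply_le_of_apply_pow_mul_le {φ : ℝ → ℝ} {R A τ β γ D E : ℝ} (hτ : τ ∈ Ioo 0 1)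
    (hβ : 0 ≤ β) (hγ : 0 ≤ γ) (hA : 0 ≤ A) (hD : 0 ≤ D) (hE : 0 ≤ E)
    (hgrid : ∀ (k : ℕ) r, 0 < r → r ≤ R →
      φ (τ ^ k * r) ≤ (τ ^ k) ^ γ * φ r + D * (τ ^ k * r) ^ β)
    (hnear : ∀ ρ s, 0 < ρ → τ * s ≤ ρ → ρ ≤ s → s ≤ R → φ ρ ≤ A * φ s + E * s ^ β)
    {ρ r : ℝ} (hρ : 0 < ρ) (hρr : ρ ≤ r) (hrR : r ≤ R) (hφr : 0 ≤ φ r) :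
    φ ρ ≤ A / τ ^ γ * ((ρ / r) ^ γ * φ r) + (A * D + E) / τ ^ β * ρ ^ β := by
  obtain ⟨hτ₀, hτ₁⟩ := hτ
  have hr : 0 < r := hρ.trans_le hρr
  obtain ⟨k, hk_lt, hk_le⟩ := exists_nat_pow_near_of_lt_one (div_pos hρ hr)
    ((div_le_one hr).mpr hρr) hτ₀ hτ₁
  rw [lt_div_iff₀ hr] at hk_lt
  rw [div_le_iff₀ hr] at hk_le
  set s := τ ^ k * r
  have hτs : τ * s < ρ := by simpa only [s, pow_succ', mul_assoc] using hk_lt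
  have hsR : s ≤ R := (mul_le_of_le_one_left hr.le (pow_le_one₀ hτ₀.le hτ₁.le)).trans hrR
  have hγ_scale : (τ ^ k) ^ γ ≤ (ρ / r) ^ γ / τ ^ γ := by
    rw [le_div_iff₀ (rpow_pos_of_pos hτ₀ γ), ← mul_rpow (pow_nonneg hτ₀.le k) hτ₀.le]
    refine rpow_le_rpow (by positivity) ?_ hγ
    rw [le_div_iff₀ hr, ← pow_succ]
    exact hk_lt.le
  have hβ_scale : s ^ β ≤ ρ ^ β / τ ^ β := by
    rw [← div_rpow hρ.le hτ₀.le]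
    exact rpow_le_rpow (hρ.le.trans hk_le) ((le_div_iff₀ hτ₀).mpr (by linarith)) hβ
  calc φ ρ ≤ A * φ s + E * s ^ β := hnear ρ s hρ hτs.le hk_le hsR
    _ ≤ A * ((τ ^ k) ^ γ * φ r + D * s ^ β) + E * s ^ β := by gcongr; exact hgrid k r hr hrR
    _ ≤ A * ((ρ / r) ^ γ / τ ^ γ * φ r + D * (ρ ^ β / τ ^ β)) + E * (ρ ^ β / τ ^ β) := by
      gcongr
    _ = A / τ ^ γ * ((ρ / r) ^ γ * φ r) + (A * D + E) / τ ^ β * ρ ^ β := by ring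

lemma mul_add_mul_le_add_add_one_mul {a b x y : ℝ} (ha : 0 ≤ a) (hb : 0 ≤ b) (hx : 0 ≤ x)
    (hy : 0 ≤ y) : a * x + b * y ≤ (a + b + 1) * (x + y) := by
  nlinarith [mul_nonneg ha hy, mul_nonneg hb hx]

theorem stmt_14_general (n : ℕ) (R A B α β : ℝ) (hA : 0 ≤ A) (hB : 0 ≤ B)
    (hβ : 0 ≤ β)
    (φ : ℝ → ℝ) (hφ : ∀ t, 0 ≤ t → t ≤ R → 0 ≤ φ t)
    (hdecay : ∀ ρ r : ℝ, 0 < ρ → ρ ≤ r → r ≤ R →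
      φ ρ ≤ A * (ρ / r) ^ α * φ r + B * r ^ β * ((r / ρ) ^ n)) :
    ∀ γ : ℝ, β < γ → γ < α → ∃ c > 0, ∀ ρ r : ℝ, 0 < ρ → ρ ≤ r → r ≤ R →
      φ ρ ≤ c * ((ρ / r) ^ γ * φ r + B * ρ ^ β) := by
  intro γ hβγ hγα
  have hγ : 0 ≤ γ := hβ.trans hβγ.le
  obtain ⟨τ, hτ, hAτ⟩ := exists_mem_Ioo_mul_rpow_le_one A (sub_pos.mpr hγα)
  have hτ₀ := hτ.1
  have hgap : 0 < τ ^ β - τ ^ γ := sub_pos.mpr (rpow_lt_rpow_of_exponent_gt hτ.1 hτ.2 hβγ)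
  refine ⟨A / τ ^ γ + (A / (τ ^ β - τ ^ γ) + 1) * τ⁻¹ ^ n / τ ^ β + 1, by positivity,
    fun ρ r hρ hρr hrR => ?_⟩
  have hφr := hφ r (hρ.trans_le hρr).le hrR
  have hmain := apply_le_of_apply_pow_mul_le hτ hβ hγ hA (by positivity) (by positivity)
    (fun k r hr hrR => apply_pow_mul_le_of_apply_mul_le hτ hβγ (by positivity)
      (fun r hr hrR => apply_mul_le_of_decay hB hφ hdecay hτ hAτ hr hrR) k hr hrR)
    (fun ρ s hρ hτs hρs hsR =>
      apply_le_of_decay hA hB (hγ.trans hγα.le) hφ hdecay hτ₀ hρ hτs hρs hsR)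
    hρ hρr hrR hφr
  calc φ ρ ≤ A / τ ^ γ * ((ρ / r) ^ γ * φ r)
        + (A / (τ ^ β - τ ^ γ) + 1) * τ⁻¹ ^ n / τ ^ β * (B * ρ ^ β) := hmain.trans_eq (by ring)
    _ ≤ _ := mul_add_mul_le_add_add_one_mul (by positivity) (by positivity)
      (mul_nonneg (rpow_nonneg (div_nonneg hρ.le (hρ.le.trans hρr)) γ) hφr) (by positivity)

/-- Iteration lemma: a decay inequality with amplification factor `(r/ρ)^n` on the
inhomogeneous term still yields polynomial decay at any intermediate rate `γ ∈ (β,α)`. -/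
theorem stmt_14 (n : ℕ) (R A B α β : ℝ) (hR : 0 < R) (hA : 0 ≤ A) (hB : 0 ≤ B)
    (hβ : 0 ≤ β) (hβα : β < α)
    (φ : ℝ → ℝ) (hφ : ∀ t, 0 ≤ t → t ≤ R → 0 ≤ φ t)
    (hdecay : ∀ ρ r : ℝ, 0 < ρ → ρ ≤ r → r ≤ R →
      φ ρ ≤ A * (ρ / r) ^ α * φ r + B * r ^ β * ((r / ρ) ^ n)) :
    ∀ γ : ℝ, β < γ → γ < α → ∃ c > 0, ∀ ρ r : ℝ, 0 < ρ → ρ ≤ r → r ≤ R →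
      φ ρ ≤ c * ((ρ / r) ^ γ * φ r + B * ρ ^ β) :=
  stmt_14_general n R A B α β hA hB hβ φ hφ hdecay
end
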